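/- arXiv:2111.09231 — 3 statements merged into one kernel-verified Lean document; each statement's English description precedes it below -/
import Mathlib

section
/- Let n ≤ r be positive integers and let p : Fin r → (Fin n → ℤ) be a family of vectors in ℤ^n. The following are equivalent: (i) there exist an injective map σ : Fin n → Fin r and ℤ-linear forms e_1, …, e_n : (Fin n → ℤ) → ℤ such that e_j(p_{σ(i)}) = −1 if i = j and e_j(p_{σ(i)}) = 0 if i ≠ j (for all 1 ≤ i, j ≤ n), and e_j(p_k) ≥ 0 for every j and every index k ∈ Fin r with k ≠ σ(j); (ii) there exists an injective map σ : Fin n → Fin r such that the vectors p_{σ(1)}, …, p_{σ(n)} form a ℤ-basis of ℤ^n and, for every index k not in the image of σ, all coordinates of p_k with respect to this basis are ≤ 0. -/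
/-!
Negating the roots turns condition (i) into a dual family: forms `f j = -e j` with
`f j (p (σ i)) = δᵢⱼ`. The map `x ↦ (f j x)ⱼ` is then a surjective endomorphism of `ℤⁿ`,
hence an isomorphism, and it carries `p ∘ σ` to the standard basis; so `p ∘ σ` is a basis
whose coordinate functionals are the `f j`, and the sign conditions of (i) and (ii) are the
same inequalities. Conversely the negated coordinate functionals of a basis are roots.
-/

namespace Pi

variable {R ι : Type*} [CommRing R] [DecidableEq ι] {v : ι → ι → R} {f : ι → (ι → R) →ₗ[R] R}

theorem pi_apply_of_dual_family (h : ∀ i j, f j (v i) = if i = j then 1 else 0) (i : ι) :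
    LinearMap.pi f (v i) = Pi.single i 1 := by
  ext j
  simp [h, Pi.single_apply, eq_comm]

variable [Fintype ι]

theorem bijective_pi_of_dual_family (h : ∀ i j, f j (v i) = if i = j then 1 else 0) :
    Function.Bijective (LinearMap.pi f) := by
  have hsurj : Function.Surjective (LinearMap.pi f) := by
    rw [← LinearMap.range_eq_top, ← top_le_iff, ← (Pi.basisFun R ι).span_eq, Submodule.span_le]
    rintro _ ⟨i, rfl⟩
    exact ⟨v i, by simp [pi_apply_of_dual_family h]⟩
  -- a surjective endomorphism of a finite module over a commutative ring is injective
  exact ⟨OrzechProperty.injective_of_surjective_endomorphism _ hsurj, hsurj⟩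

noncomputable def basisOfDualFamily (v : ι → ι → R) (f : ι → (ι → R) →ₗ[R] R)
    (h : ∀ i j, f j (v i) = if i = j then 1 else 0) : Module.Basis ι R (ι → R) :=
  (Pi.basisFun R ι).map (LinearEquiv.ofBijective _ (bijective_pi_of_dual_family h)).symm

variable (h : ∀ i j, f j (v i) = if i = j then 1 else 0)

@[simp]
theorem basisOfDualFamily_apply (i : ι) : basisOfDualFamily v f h i = v i := by
  rw [basisOfDualFamily, Module.Basis.map_apply, LinearEquiv.symm_apply_eq]
  simp [pi_apply_of_dual_family h]

@[simp]
theorem basisOfDualFamily_repr_apply (x : ι → R) (i : ι) :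
    (basisOfDualFamily v f h).repr x i = f i x := by
  simp [basisOfDualFamily]

end Pi

theorem euler_toric_complete_collection_iff_basis_negative_octant_general
    (n r : ℕ) (p : Fin r → (Fin n → ℤ)) :
    (∃ σ : Fin n → Fin r, Function.Injective σ ∧
      ∃ e : Fin n → ((Fin n → ℤ) →ₗ[ℤ] ℤ),
        (∀ i j : Fin n, e j (p (σ i)) = if i = j then -1 else 0) ∧
        (∀ j : Fin n, ∀ k : Fin r, k ≠ σ j → 0 ≤ e j (p k))) ↔
    (∃ σ : Fin n → Fin r, Function.Injective σ ∧
      ∃ b : Module.Basis (Fin n) ℤ (Fin n → ℤ), (∀ i : Fin n, b i = p (σ i)) ∧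
        ∀ k : Fin r, k ∉ Set.range σ → ∀ i : Fin n, b.repr (p k) i ≤ 0) := by
  constructor
  · rintro ⟨σ, hσ, e, hdual, hroot⟩
    have hdual' : ∀ i j, (-e j) (p (σ i)) = if i = j then 1 else 0 := by
      intro i j
      rw [LinearMap.neg_apply, hdual, apply_ite Neg.neg, neg_neg, neg_zero]
    refine ⟨σ, hσ, Pi.basisOfDualFamily _ _ hdual', fun i => by simp, fun k hk i => ?_⟩
    simpa using hroot i k fun hki => hk ⟨i, hki.symm⟩
  · rintro ⟨σ, hσ, b, hb, hneg⟩
    refine ⟨σ, hσ, fun j => -b.coord j, fun i j => ?_, fun j k hk => ?_⟩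
    · rw [LinearMap.neg_apply, ← hb, b.coord_apply, b.repr_self_apply, apply_ite Neg.neg, neg_zero]
    · rw [LinearMap.neg_apply, neg_nonneg]
      by_cases hkσ : k ∈ Set.range σ
      · obtain ⟨i, rfl⟩ := hkσ
        have hij : i ≠ j := fun hij => hk (hij ▸ rfl)
        simp [← hb, b.coord_apply, hij]
      · exact hneg k hkσ j

/-- Combinatorial criterion: a complete collection of Demazure roots exists for the
family of primitive ray generators `p : Fin r → (Fin n → ℤ)` iff one can choose `n`
of the vectors forming a ℤ-basis of ℤⁿ such that all remaining vectors lie in the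
negative octant with respect to this basis. -/
theorem euler_toric_complete_collection_iff_basis_negative_octant
    (n r : ℕ) (hn : 0 < n) (hnr : n ≤ r) (p : Fin r → (Fin n → ℤ)) :
    (∃ σ : Fin n → Fin r, Function.Injective σ ∧
      ∃ e : Fin n → ((Fin n → ℤ) →ₗ[ℤ] ℤ),
        (∀ i j : Fin n, e j (p (σ i)) = if i = j then -1 else 0) ∧
        (∀ j : Fin n, ∀ k : Fin r, k ≠ σ j → 0 ≤ e j (p k))) ↔
    (∃ σ : Fin n → Fin r, Function.Injective σ ∧
      ∃ b : Module.Basis (Fin n) ℤ (Fin n → ℤ), (∀ i : Fin n, b i = p (σ i)) ∧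
        ∀ k : Fin r, k ∉ Set.range σ → ∀ i : Fin n, b.repr (p k) i ≤ 0) :=
  euler_toric_complete_collection_iff_basis_negative_octant_general n r p
end

section
/- Let n ≥ 1 and k ≥ 0 be integers and let a_1, …, a_k ∈ ℕ^n. Consider in the affine space ℂ^{n+k} the sets S(a) = {(t, t^{a_1}, …, t^{a_k}) : t ∈ ℂ^n with all coordinates t_j ≠ 0} and V(a) = {(y, y^{a_1}, …, y^{a_k}) : y ∈ ℂ^n}. Then the Zariski closure of S(a) equals V(a); that is, MvPolynomial.zeroLocus (MvPolynomial.vanishingIdeal S(a)) = V(a), where the vanishing ideal and zero locus are taken in the polynomial ring over ℂ in n + k variables acting on points of ℂ^{n+k}. -/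
/-!
The torus `{t | ∀ j, t j ≠ 0}` is Zariski dense in affine space, since a polynomial vanishing on a
product of infinite sets is zero. Hence the Zariski closure of its image under the polynomial map
`y ↦ (y, y^{a₁}, …, y^{a_k})` contains the image of all of affine space. Conversely, that image is
the common zero set of the binomials `z_{n+i} - z^{a_i}`, so it is already closed.
-/

open MvPolynomial

namespace MvPolynomial

theorem vanishingIdeal_setOf_forall_ne_zero {K σ : Type*} [Field K] [Infinite K] :
    vanishingIdeal K {x : σ → K | ∀ i, x i ≠ 0} = ⊥ := by
  refine (Submodule.eq_bot_iff _).mpr fun p hp ↦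
    funext_set (fun _ ↦ {0}ᶜ) (fun _ ↦ (Set.finite_singleton 0).infinite_compl)
      fun x hx ↦ ?_
  rw [map_zero, ← coe_aeval_eq_eval]
  exact hp x fun i ↦ hx i trivial

theorem range_subset_zeroLocus_vanishingIdeal_image {k K σ τ : Type*} [Field k] [Field K]
    [Algebra k K] (f : σ → MvPolynomial τ k) {D : Set (τ → K)}
    (hD : vanishingIdeal k D = ⊥) :
    Set.range (fun y s ↦ aeval y (f s)) ⊆
      zeroLocus K (vanishingIdeal k ((fun y s ↦ aeval y (f s)) '' D)) := by
  rintro _ ⟨y, rfl⟩ p hp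
  have hpull : bind₁ f p ∈ vanishingIdeal k D := fun x hx ↦ by
    rw [aeval_bind₁]
    exact hp _ ⟨x, hx, rfl⟩
  rw [hD, Ideal.mem_bot] at hpull
  rw [← aeval_bind₁, hpull, map_zero]

end MvPolynomial

section MonomialGraph

variable {R σ κ : Type*} [CommRing R] [Fintype σ] (a : κ → σ → ℕ)

def monomialGraph (y : σ → R) : σ ⊕ κ → R :=
  Sum.elim y fun i ↦ ∏ j, y j ^ a i j

noncomputable def monomialGraphPoly : σ ⊕ κ → MvPolynomial σ R :=
  Sum.elim X fun i ↦ ∏ j, X j ^ a i j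

noncomputable def monomialRelation (i : κ) : MvPolynomial (σ ⊕ κ) R :=
  X (Sum.inr i) - ∏ j, X (Sum.inl j) ^ a i j

variable {a}

theorem monomialGraph_eq_iff {y : σ → R} {z : σ ⊕ κ → R} :
    monomialGraph a y = z ↔
      (∀ j, z (Sum.inl j) = y j) ∧ ∀ i, z (Sum.inr i) = ∏ j, y j ^ a i j := by
  simp only [funext_iff, Sum.forall, monomialGraph, Sum.elim_inl, Sum.elim_inr, eq_comm]

theorem aeval_monomialGraphPoly (y : σ → R) (s : σ ⊕ κ) :
    aeval y (monomialGraphPoly (R := R) a s) = monomialGraph a y s := by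
  cases s <;> simp [monomialGraph, monomialGraphPoly]

theorem range_monomialGraph_eq_zeroLocus {K : Type*} [Field K] :
    Set.range (monomialGraph a) =
      zeroLocus K (Ideal.span (Set.range (monomialRelation (R := K) a))) := by
  ext z
  simp only [zeroLocus_span, Set.forall_mem_range, Set.mem_ofPred_eq, monomialRelation, map_sub,
    map_prod, map_pow, aeval_X, sub_eq_zero]
  exact ⟨by rintro ⟨y, rfl⟩; simp [monomialGraph],
    fun h ↦ ⟨fun j ↦ z (Sum.inl j), monomialGraph_eq_iff.mpr ⟨fun _ ↦ rfl, h⟩⟩⟩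

end MonomialGraph

theorem zariski_closure_of_monomial_torus_chart_general
    (n k : ℕ) (a : Fin k → Fin n → ℕ) :
    MvPolynomial.zeroLocus ℂ (MvPolynomial.vanishingIdeal ℂ
      {z : Fin n ⊕ Fin k → ℂ | ∃ t : Fin n → ℂ, (∀ j, t j ≠ 0) ∧
        (∀ j, z (Sum.inl j) = t j) ∧ (∀ i, z (Sum.inr i) = ∏ j, t j ^ a i j)}) =
    {z : Fin n ⊕ Fin k → ℂ | ∃ y : Fin n → ℂ,
        (∀ j, z (Sum.inl j) = y j) ∧ (∀ i, z (Sum.inr i) = ∏ j, y j ^ a i j)} := by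
  have torus_eq : {z : Fin n ⊕ Fin k → ℂ | ∃ t : Fin n → ℂ, (∀ j, t j ≠ 0) ∧
      (∀ j, z (Sum.inl j) = t j) ∧ (∀ i, z (Sum.inr i) = ∏ j, t j ^ a i j)} =
      monomialGraph a '' {t | ∀ j, t j ≠ 0} := by
    ext z
    simp only [Set.mem_image, monomialGraph_eq_iff, Set.mem_ofPred_eq]
  have graph_eq : {z : Fin n ⊕ Fin k → ℂ | ∃ y : Fin n → ℂ,
      (∀ j, z (Sum.inl j) = y j) ∧ (∀ i, z (Sum.inr i) = ∏ j, y j ^ a i j)} =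
      Set.range (monomialGraph a) := by
    ext z
    simp only [Set.mem_range, monomialGraph_eq_iff, Set.mem_ofPred_eq]
  rw [torus_eq, graph_eq]
  apply subset_antisymm
  · rw [range_monomialGraph_eq_zeroLocus]
    refine zeroLocus_anti_mono (le_zeroLocus_iff_le_vanishingIdeal.mp ?_)
    rw [← range_monomialGraph_eq_zeroLocus]
    exact Set.image_subset_range _ _
  · simpa only [aeval_monomialGraphPoly] using
      range_subset_zeroLocus_vanishingIdeal_image (monomialGraphPoly (R := ℂ) a)
        vanishingIdeal_setOf_forall_ne_zero

/-- The Zariski closure of the monomial parametrization of the torus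
`t ↦ (t, t^{a₁}, …, t^{a_k})` (all coordinates of `t` nonzero) in `ℂ^{n+k}`
is the full monomial variety `{(y, y^{a₁}, …, y^{a_k}) : y ∈ ℂⁿ}`. -/
theorem zariski_closure_of_monomial_torus_chart
    (n k : ℕ) (hn : 0 < n) (a : Fin k → Fin n → ℕ) :
    MvPolynomial.zeroLocus ℂ (MvPolynomial.vanishingIdeal ℂ
      {z : Fin n ⊕ Fin k → ℂ | ∃ t : Fin n → ℂ, (∀ j, t j ≠ 0) ∧
        (∀ j, z (Sum.inl j) = t j) ∧ (∀ i, z (Sum.inr i) = ∏ j, t j ^ a i j)}) =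
    {z : Fin n ⊕ Fin k → ℂ | ∃ y : Fin n → ℂ,
        (∀ j, z (Sum.inl j) = y j) ∧ (∀ i, z (Sum.inr i) = ∏ j, y j ^ a i j)} :=
  zariski_closure_of_monomial_torus_chart_general n k a
end

section
/- Let s ≥ 1 be an integer and let S = {(1, 0), (0, 1), (s, 1)} ⊆ ℤ × ℤ. There is no additive group automorphism φ of ℤ × ℤ such that φ maps the set S onto itself and φ maps the additive submonoid generated by {(1, 0), (0, 1)} onto the additive submonoid generated by {(1, 0), (s, 1)}. -/
/-- For `s ≥ 1` there is no additive automorphism of `ℤ × ℤ` mapping the set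
`S = {(1,0), (0,1), (s,1)}` onto itself and carrying the submonoid generated by
`{(1,0), (0,1)}` onto the submonoid generated by `{(1,0), (s,1)}`. -/
theorem no_automorphism_exchanging_hirzebruch_monoids (s : ℤ) (hs : 1 ≤ s) :
    ¬ ∃ φ : (ℤ × ℤ) ≃+ (ℤ × ℤ),
      (φ '' ({(1, 0), (0, 1), (s, 1)} : Set (ℤ × ℤ)) = {(1, 0), (0, 1), (s, 1)}) ∧
      (AddSubmonoid.closure ({(1, 0), (0, 1)} : Set (ℤ × ℤ))).map φ.toAddMonoidHom =
        AddSubmonoid.closure ({(1, 0), (s, 1)} : Set (ℤ × ℤ)) := by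
  rintro ⟨φ, hS, hmap⟩
  -- closure S = closure {(1,0),(0,1)} since (s,1) = s•(1,0) + (0,1)
  have hcl : AddSubmonoid.closure ({(1, 0), (0, 1), (s, 1)} : Set (ℤ × ℤ)) =
      AddSubmonoid.closure ({(1, 0), (0, 1)} : Set (ℤ × ℤ)) := by
    apply le_antisymm
    · rw [AddSubmonoid.closure_le]
      rintro x (rfl | rfl | rfl)
      · exact AddSubmonoid.subset_closure (by left; rfl)
      · exact AddSubmonoid.subset_closure (by right; rfl)
      · have h1 : ((1, 0) : ℤ × ℤ) ∈ AddSubmonoid.closure ({(1, 0), (0, 1)} : Set (ℤ × ℤ)) :=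
          AddSubmonoid.subset_closure (by left; rfl)
        have h2 : ((0, 1) : ℤ × ℤ) ∈ AddSubmonoid.closure ({(1, 0), (0, 1)} : Set (ℤ × ℤ)) :=
          AddSubmonoid.subset_closure (by right; rfl)
        have := AddSubmonoid.add_mem _ (AddSubmonoid.nsmul_mem _ h1 s.toNat) h2
        have he : s.toNat • ((1, 0) : ℤ × ℤ) + (0, 1) = (s, 1) := by
          simp [Prod.ext_iff, Int.toNat_of_nonneg (by omega : (0:ℤ) ≤ s)]
        rwa [he] at this
    · refine AddSubmonoid.closure_mono ?_
      intro x hx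
      rcases hx with rfl | rfl
      · left; rfl
      · right; left; rfl
  have key : AddSubmonoid.closure ({(1, 0), (0, 1)} : Set (ℤ × ℤ)) =
      AddSubmonoid.closure ({(1, 0), (s, 1)} : Set (ℤ × ℤ)) := by
    calc AddSubmonoid.closure ({(1, 0), (0, 1)} : Set (ℤ × ℤ))
        = AddSubmonoid.closure ({(1, 0), (0, 1), (s, 1)} : Set (ℤ × ℤ)) := hcl.symm
      _ = AddSubmonoid.closure (φ '' {(1, 0), (0, 1), (s, 1)}) := by rw [hS]
      _ = (AddSubmonoid.closure ({(1, 0), (0, 1), (s, 1)} : Set (ℤ × ℤ))).map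
            φ.toAddMonoidHom := (AddMonoidHom.map_mclosure _ _).symm
      _ = (AddSubmonoid.closure ({(1, 0), (0, 1)} : Set (ℤ × ℤ))).map φ.toAddMonoidHom := by
            rw [hcl]
      _ = AddSubmonoid.closure ({(1, 0), (s, 1)} : Set (ℤ × ℤ)) := hmap
  have h01 : ((0, 1) : ℤ × ℤ) ∈ AddSubmonoid.closure ({(1, 0), (s, 1)} : Set (ℤ × ℤ)) := by
    rw [← key]; exact AddSubmonoid.subset_closure (by right; rfl)
  rw [AddSubmonoid.mem_closure_pair] at h01
  obtain ⟨m, n, hmn⟩ := h01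
  have h1 : (m : ℤ) * 1 + (n : ℤ) * s = 0 := by
    have := congrArg Prod.fst hmn
    simpa [Prod.smul_mk, nsmul_eq_mul] using this
  have h2 : (m : ℤ) * 0 + (n : ℤ) * 1 = 1 := by
    have := congrArg Prod.snd hmn
    simpa [Prod.smul_mk, nsmul_eq_mul] using this
  have hm : (0:ℤ) ≤ (m:ℤ) := Int.natCast_nonneg m
  have hn : (0:ℤ) ≤ (n:ℤ) := Int.natCast_nonneg n
  have hn1 : (n:ℤ) = 1 := by linarith
  rw [hn1] at h1
  nlinarith
end
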